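/- With the notation below, (1/n!) Σ_{r} e^{c_r} − e^{α + β/2} = (1/n!) ∫₀¹ f(u) · exp((1−u)α + (1−u²)β/2) du, where the sum is over all n-tuples r of pairwise distinct elements of {1,…,n} (i.e. all permutations), f(u) = f₁(u)/(4n) + f₂(u)/(n²(n−1)) + f₃(u)/(4n²(n−1)), f₁(u) = Σ_{(j,k), j≠k} Σ_r z_{j,k,r(j),r(k)} (1 − u z_{j,k,r(j),r(k)} − exp(−u z_{j,k,r(j),r(k)})) e^{u c_r}, f₂(u) = Σ_{(j,k,ℓ) pairwise distinct} Σ_r u z_{j,k,r(j),r(k)}² (1 − exp(u z_{j,ℓ,r(ℓ),r(j)})) e^{u c_r}, and f₃(u) = Σ_{(j,k,ℓ,m) pairwise distinct} Σ_r u z_{j,k,r(j),r(k)}² (1 − exp(u z_{j,ℓ,r(ℓ),r(j)} + u z_{k,m,r(m),r(k)})) e^{u c_r}. -/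

import Mathlib

/-!
Write `c_π = ∑ j, y j (π j)` and `E(u) = exp((1 - u)α + (1 - u²)β/2)`. Since
`G(u) = (∑ π, exp (u c_π)) E(u)` has derivative `(∑ π, (c_π - α - uβ) exp (u c_π)) E(u)`, with
`G(1) = ∑ π, exp c_π` and `G(0) = n! exp(α + β/2)`, it suffices to show
`f(u) = ∑ π, (c_π - α - uβ) exp (u c_π)`.

Replacing `π` by `π ∘ (j k)`, `π ∘ (j l)` or `π ∘ (j l) ∘ (k m)` shifts `u c_π` by exactly the
exponent attached to the corresponding term of `f₁`, `f₂` or `f₃`, so that reindexing removes every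
exponential except `exp (u c_π)`. What is left is `c_π - α - uβ` by a counting identity over
pairwise distinct indices: the weights combine to `∑ j k r s, z_{j,k,r,s}²`, which equals
`4 n² ∑ ỹ² = 4 n² (n - 1) β` because `z` is unchanged by double centring and `ỹ` has zero row
and column sums.
-/

open Finset

section FinsetSums

variable {ι M : Type*} [Fintype ι] [DecidableEq ι] [AddCommGroup M]

theorem sum_ite_ne_ne {j k : ι} (hjk : j ≠ k) (F : ι → M) :
    ∑ l, (if j ≠ l ∧ k ≠ l then F l else 0) = ∑ l, F l - F j - F k := by
  have : univ.filter (fun l => j ≠ l ∧ k ≠ l) = univ \ {j, k} := by ext; simp [eq_comm]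
  rw [← sum_filter, this, sum_sdiff_eq_sub (subset_univ _), sum_pair hjk, sub_sub]

theorem sum_ite_ne_ne_ne {j k l : ι} (hjk : j ≠ k) (hjl : j ≠ l) (hkl : k ≠ l) (F : ι → M) :
    ∑ m, (if j ≠ m ∧ k ≠ m ∧ l ≠ m then F m else 0) = ∑ m, F m - F j - F k - F l := by
  have : univ.filter (fun m => j ≠ m ∧ k ≠ m ∧ l ≠ m) = univ \ {j, k, l} := by ext; simp [eq_comm]
  rw [← sum_filter, this, sum_sdiff_eq_sub (subset_univ _), sum_insert (by simp [hjk, hjl]),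
    sum_pair hkl]
  abel

end FinsetSums

theorem sum_sum_sub_sq_of_sum_eq_zero {ι R : Type*} [Fintype ι] [CommRing R] (d : ι → R)
    (hd : ∑ r, d r = 0) :
    ∑ r, ∑ s, (d r - d s) ^ 2 = 2 * Fintype.card ι * ∑ r, d r ^ 2 := by
  simp only [sub_sq, sum_add_distrib, sum_sub_distrib, sum_const, card_univ, nsmul_eq_mul,
    mul_assoc, ← mul_sum, ← sum_mul, hd]
  ring

section Symmetric

variable {ι R : Type*} [Fintype ι] [DecidableEq ι] [CommRing R] (w : ι → ι → ι → ι → R)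

theorem sum_ite_distinct_four_of_ne (h_diag : ∀ j k r, w j k r r = 0)
    (h_swap_right : ∀ j k r s, w j k s r = w j k r s) {j k : ι} (hjk : j ≠ k) :
    ∑ l, ∑ m, (if j ≠ k ∧ j ≠ l ∧ j ≠ m ∧ k ≠ l ∧ k ≠ m ∧ l ≠ m then
        w j k j k - w j k l m else 0) =
      (Fintype.card ι - 1) * (Fintype.card ι - 4) * w j k j k - ∑ l, ∑ m, w j k l m +
        ∑ m, w j k j m + ∑ m, w j k k m + ∑ l, w j k l j + ∑ l, w j k l k := by
  set G : ι → R := fun l =>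
    (Fintype.card ι - 3) * w j k j k - ∑ m, w j k l m + w j k l j + w j k l k
  calc _ = ∑ l, if j ≠ l ∧ k ≠ l then G l else 0 := by
        refine sum_congr rfl fun l _ => ?_
        by_cases hl : j ≠ l ∧ k ≠ l
        · simp only [hjk, hl, ne_eq, not_false_eq_true, true_and, if_true]
          rw [sum_ite_ne_ne_ne hjk hl.1 hl.2]
          simp only [G, h_diag, sum_sub_distrib, sum_const, card_univ, nsmul_eq_mul]
          ring
        · simp only [hl, if_false]
          exact sum_eq_zero fun m _ => if_neg fun h => hl ⟨h.2.1, h.2.2.2.1⟩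
    _ = _ := by
        rw [sum_ite_ne_ne hjk]
        simp only [G, h_diag, h_swap_right j k j k, sum_sub_distrib, sum_add_distrib, sum_const,
          card_univ, nsmul_eq_mul]
        ring

theorem sum_ite_distinct_three (h_diag : ∀ j k r, w j k r r = 0)
    (h_self : ∀ j r s, w j j r s = 0) :
    ∑ j, ∑ k, ∑ l, (if j ≠ k ∧ j ≠ l ∧ k ≠ l then w j k j k - w j k l k else 0) =
      (Fintype.card ι - 1) * ∑ j, ∑ k, w j k j k - ∑ j, ∑ k, ∑ l, w j k l k := by
  simp only [mul_sum, ← sum_sub_distrib]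
  refine sum_congr rfl fun j _ => sum_congr rfl fun k _ => ?_
  by_cases hjk : j = k
  · subst hjk; simp [h_self]
  · simp only [hjk, ne_eq, not_false_eq_true, true_and]
    rw [sum_ite_ne_ne hjk]
    simp only [sum_sub_distrib, sum_const, card_univ, nsmul_eq_mul, sub_self, sub_zero, h_diag]
    ring

theorem sum_ite_distinct_four (h_diag : ∀ j k r, w j k r r = 0)
    (h_self : ∀ j r s, w j j r s = 0) (h_swap_right : ∀ j k r s, w j k s r = w j k r s)
    (h_swap_left : ∀ j k r s, w k j r s = w j k r s) :
    ∑ j, ∑ k, ∑ l, ∑ m, (if j ≠ k ∧ j ≠ l ∧ j ≠ m ∧ k ≠ l ∧ k ≠ m ∧ l ≠ m then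
        w j k j k - w j k l m else 0) =
      (Fintype.card ι - 1) * (Fintype.card ι - 4) * ∑ j, ∑ k, w j k j k -
        ∑ j, ∑ k, ∑ l, ∑ m, w j k l m + 4 * ∑ j, ∑ k, ∑ l, w j k l k := by
  have h_jm : ∑ j, ∑ k, ∑ m, w j k j m = ∑ j, ∑ k, ∑ l, w j k l k :=
    calc _ = ∑ j, ∑ k, ∑ m, w k j m j :=
          sum_congr rfl fun j _ => sum_congr rfl fun k _ => sum_congr rfl fun m _ => by
            rw [h_swap_left k j, h_swap_right]
      _ = _ := sum_comm
  have h_km : ∑ j, ∑ k, ∑ m, w j k k m = ∑ j, ∑ k, ∑ l, w j k l k :=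
    sum_congr rfl fun j _ => sum_congr rfl fun k _ => sum_congr rfl fun m _ => h_swap_right j k m k
  have h_lj : ∑ j, ∑ k, ∑ l, w j k l j = ∑ j, ∑ k, ∑ l, w j k l k :=
    calc _ = ∑ j, ∑ k, ∑ l, w k j l j :=
          sum_congr rfl fun j _ => sum_congr rfl fun k _ => sum_congr rfl fun l _ =>
            h_swap_left k j l j
      _ = _ := sum_comm
  have h_pair : ∀ j k, ∑ l, ∑ m, (if j ≠ k ∧ j ≠ l ∧ j ≠ m ∧ k ≠ l ∧ k ≠ m ∧ l ≠ m then
        w j k j k - w j k l m else 0) =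
      (Fintype.card ι - 1) * (Fintype.card ι - 4) * w j k j k - ∑ l, ∑ m, w j k l m +
        ∑ m, w j k j m + ∑ m, w j k k m + ∑ l, w j k l j + ∑ l, w j k l k := by
    intro j k
    by_cases hjk : j = k
    · subst hjk; simp [h_self]
    · exact sum_ite_distinct_four_of_ne w h_diag h_swap_right hjk
  simp only [h_pair, sum_add_distrib, sum_sub_distrib, ← mul_sum, h_jm, h_km, h_lj]
  ring

theorem card_mul_sum_sub_distinct_eq_sum (h_diag : ∀ j k r, w j k r r = 0)
    (h_self : ∀ j r s, w j j r s = 0) (h_swap_right : ∀ j k r s, w j k s r = w j k r s)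
    (h_swap_left : ∀ j k r s, w k j r s = w j k r s) :
    Fintype.card ι * (Fintype.card ι - 1) * ∑ j, ∑ k, w j k j k
      - 4 * ∑ j, ∑ k, ∑ l, (if j ≠ k ∧ j ≠ l ∧ k ≠ l then w j k j k - w j k l k else 0)
      - ∑ j, ∑ k, ∑ l, ∑ m, (if j ≠ k ∧ j ≠ l ∧ j ≠ m ∧ k ≠ l ∧ k ≠ m ∧ l ≠ m then
          w j k j k - w j k l m else 0) =
      ∑ j, ∑ k, ∑ r, ∑ s, w j k r s := by
  rw [sum_ite_distinct_three w h_diag h_self,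
    sum_ite_distinct_four w h_diag h_self h_swap_right h_swap_left]
  ring

end Symmetric

section DoubleDiff

variable {ι κ R : Type*} [CommRing R]

def doubleDiff (y : ι → κ → R) (j k : ι) (r s : κ) : R := y j r - y k r - y j s + y k s

@[simp]
theorem doubleDiff_self_left (y : ι → κ → R) (j : ι) (r s : κ) : doubleDiff y j j r s = 0 := by
  simp [doubleDiff]

@[simp]
theorem doubleDiff_self_right (y : ι → κ → R) (j k : ι) (r : κ) : doubleDiff y j k r r = 0 := by
  simp [doubleDiff]

theorem doubleDiff_swap_left (y : ι → κ → R) (j k : ι) (r s : κ) :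
    doubleDiff y k j r s = -doubleDiff y j k r s := by
  simp only [doubleDiff]; ring

theorem doubleDiff_swap_right (y : ι → κ → R) (j k : ι) (r s : κ) :
    doubleDiff y j k s r = -doubleDiff y j k r s := by
  simp only [doubleDiff]; ring

variable [Fintype ι] [Fintype κ]

theorem sum_doubleDiff_sq_of_sum_eq_zero (a : ι → κ → R) (h_col : ∀ r, ∑ j, a j r = 0)
    (h_row : ∀ j, ∑ r, a j r = 0) :
    ∑ j, ∑ k, ∑ r, ∑ s, doubleDiff a j k r s ^ 2 =
      4 * Fintype.card ι * Fintype.card κ * ∑ j, ∑ r, a j r ^ 2 :=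
  calc _ = ∑ j, ∑ k, 2 * Fintype.card κ * ∑ r, (a j r - a k r) ^ 2 := by
        refine sum_congr rfl fun j _ => sum_congr rfl fun k _ => ?_
        rw [← sum_sum_sub_sq_of_sum_eq_zero _ (by simp [sum_sub_distrib, h_row])]
        refine sum_congr rfl fun r _ => sum_congr rfl fun s _ => ?_
        rw [doubleDiff]
        ring
    _ = 2 * Fintype.card κ * ∑ r, ∑ j, ∑ k, (a j r - a k r) ^ 2 := by
        simp only [← mul_sum]
        congr 1
        exact (sum_congr rfl fun j _ => sum_comm).trans sum_comm
    _ = 2 * Fintype.card κ * ∑ r, 2 * Fintype.card ι * ∑ j, a j r ^ 2 := by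
        simp only [sum_sum_sub_sq_of_sum_eq_zero _ (h_col _)]
    _ = _ := by
        rw [← mul_sum, sum_comm]
        ring

variable {K : Type*} [Field K]

def doubleCenter (y : ι → κ → K) (j : ι) (r : κ) : K :=
  y j r - (∑ k, y k r) / Fintype.card ι - (∑ s, y j s) / Fintype.card κ +
    (∑ k, ∑ s, y k s) / (Fintype.card ι * Fintype.card κ)

theorem doubleDiff_doubleCenter (y : ι → κ → K) : doubleDiff (doubleCenter y) = doubleDiff y := by
  funext j k r s
  simp only [doubleDiff, doubleCenter]
  ring

variable [CharZero K]

theorem sum_doubleCenter_left [Nonempty ι] (y : ι → κ → K) (r : κ) :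
    ∑ j, doubleCenter y j r = 0 := by
  simp only [doubleCenter, sum_add_distrib, sum_sub_distrib, sum_const, card_univ, nsmul_eq_mul,
    ← sum_div]
  rw [sum_comm (γ := ι)]
  field_simp
  ring

theorem sum_doubleCenter_right [Nonempty κ] (y : ι → κ → K) (j : ι) :
    ∑ r, doubleCenter y j r = 0 := by
  simp only [doubleCenter, sum_add_distrib, sum_sub_distrib, sum_const, card_univ, nsmul_eq_mul,
    ← sum_div]
  rw [sum_comm (γ := κ)]
  field_simp
  ring

end DoubleDiff

section Perm

open Equiv

variable {ι R : Type*} [Fintype ι] [CommRing R] (y : ι → ι → R)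

def permSum (π : Perm ι) : R := ∑ j, y j (π j)

theorem permSum_mul_swap [DecidableEq ι] {j k : ι} (hjk : j ≠ k) (π : Perm ι) :
    permSum y (π * swap j k) = permSum y π + doubleDiff y j k (π k) (π j) := by
  have h : ∑ i, (y i ((π * swap j k) i) - y i (π i)) = doubleDiff y j k (π k) (π j) := by
    rw [Fintype.sum_eq_add j k hjk fun i hi => by
      rw [Perm.mul_apply, swap_apply_of_ne_of_ne hi.1 hi.2, sub_self]]
    simp only [Perm.mul_apply, swap_apply_left, swap_apply_right, doubleDiff]
    ring
  rw [permSum, permSum, ← h, sum_sub_distrib]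
  ring

theorem sum_doubleDiff_apply_perm (π : Perm ι) :
    ∑ j, ∑ k, doubleDiff y j k (π j) (π k) =
      2 * Fintype.card ι * permSum y π - 2 * ∑ j, ∑ r, y j r := by
  have h_col : ∑ j, ∑ k, y k (π j) = ∑ j, ∑ r, y j r :=
    (Equiv.sum_comp π fun r => ∑ k, y k r).trans sum_comm
  have h_row : ∑ j, ∑ k, y j (π k) = ∑ j, ∑ r, y j r :=
    sum_congr rfl fun j _ => Equiv.sum_comp π (y j)
  simp only [doubleDiff, sum_add_distrib, sum_sub_distrib, sum_const, card_univ, nsmul_eq_mul,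
    ← mul_sum, h_col, h_row, permSum]
  ring

theorem sum_doubleDiff_sq_apply_perm (π : Perm ι) :
    ∑ j, ∑ k, ∑ r, ∑ s, doubleDiff y j k (π r) (π s) ^ 2 =
      ∑ j, ∑ k, ∑ r, ∑ s, doubleDiff y j k r s ^ 2 := by
  refine sum_congr rfl fun j _ => sum_congr rfl fun k _ => ?_
  calc _ = ∑ r, ∑ s, doubleDiff y j k (π r) s ^ 2 :=
        sum_congr rfl fun r _ => Equiv.sum_comp π fun s => doubleDiff y j k (π r) s ^ 2
    _ = _ := Equiv.sum_comp π fun r => ∑ s, doubleDiff y j k r s ^ 2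

end Perm

theorem card_mul_sum_doubleDiff_sq_sub_distinct {ι K : Type*} [Fintype ι] [DecidableEq ι]
    [Nonempty ι] [Field K] [CharZero K] (y : ι → ι → K) (π : Equiv.Perm ι) :
    Fintype.card ι * (Fintype.card ι - 1) * ∑ j, ∑ k, doubleDiff y j k (π j) (π k) ^ 2
      - 4 * ∑ j, ∑ k, ∑ l, (if j ≠ k ∧ j ≠ l ∧ k ≠ l then
          doubleDiff y j k (π j) (π k) ^ 2 - doubleDiff y j k (π l) (π k) ^ 2 else 0)
      - ∑ j, ∑ k, ∑ l, ∑ m, (if j ≠ k ∧ j ≠ l ∧ j ≠ m ∧ k ≠ l ∧ k ≠ m ∧ l ≠ m then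
          doubleDiff y j k (π j) (π k) ^ 2 - doubleDiff y j k (π l) (π m) ^ 2 else 0) =
      4 * Fintype.card ι ^ 2 * ∑ j, ∑ r, doubleCenter y j r ^ 2 := by
  refine (card_mul_sum_sub_distinct_eq_sum (fun j k r s => doubleDiff y j k (π r) (π s) ^ 2)
    (fun j k r => by simp) (fun j r s => by simp)
    (fun j k r s => by rw [doubleDiff_swap_right, neg_sq])
    (fun j k r s => by rw [doubleDiff_swap_left, neg_sq])).trans ?_
  rw [sum_doubleDiff_sq_apply_perm, ← doubleDiff_doubleCenter,
    sum_doubleDiff_sq_of_sum_eq_zero _ (sum_doubleCenter_left y) (sum_doubleCenter_right y)]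
  ring

section Exp

open Equiv Complex

theorem sum_mul_exp_of_mul_right {G : Type*} [Group G] [Fintype G] (σ : G) {c d F H : G → ℂ}
    (u : ℂ) (hH : ∀ π, H (π * σ) = F π) (hc : ∀ π, c (π * σ) = c π + d π) :
    ∑ π, F π * exp (u * d π) * exp (u * c π) = ∑ π, H π * exp (u * c π) := by
  calc _ = ∑ π, H (π * σ) * exp (u * c (π * σ)) := sum_congr rfl fun π _ => by
        rw [hH, hc, mul_add, exp_add]
        ring
    _ = _ := Equiv.sum_comp (Equiv.mulRight σ) fun π => H π * exp (u * c π)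

variable {ι : Type*} [Fintype ι] [DecidableEq ι] (y : ι → ι → ℂ) (u : ℂ)

theorem sum_doubleDiff_mul_exp_neg {j k : ι} (hjk : j ≠ k) :
    ∑ π : Perm ι, doubleDiff y j k (π j) (π k) * exp (-(u * doubleDiff y j k (π j) (π k))) *
        exp (u * permSum y π) =
      -∑ π : Perm ι, doubleDiff y j k (π j) (π k) * exp (u * permSum y π) := by
  have := sum_mul_exp_of_mul_right (swap j k) u (c := permSum y)
    (F := fun π => doubleDiff y j k (π j) (π k)) (d := fun π => -doubleDiff y j k (π j) (π k))
    (H := fun π => -doubleDiff y j k (π j) (π k)) (fun π => by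
      rw [Perm.mul_apply, Perm.mul_apply, swap_apply_left, swap_apply_right,
        doubleDiff_swap_right, neg_neg])
    fun π => by rw [permSum_mul_swap y hjk, doubleDiff_swap_right]
  simpa only [mul_neg, neg_mul, sum_neg_distrib] using this

theorem sum_doubleDiff_sq_mul_exp_swap {j k l : ι} (hjl : j ≠ l) (hkj : k ≠ j) (hkl : k ≠ l) :
    ∑ π : Perm ι, doubleDiff y j k (π j) (π k) ^ 2 * exp (u * doubleDiff y j l (π l) (π j)) *
        exp (u * permSum y π) =
      ∑ π : Perm ι, doubleDiff y j k (π l) (π k) ^ 2 * exp (u * permSum y π) := by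
  refine sum_mul_exp_of_mul_right (swap j l) u (fun π => ?_) fun π => permSum_mul_swap y hjl π
  simp [swap_apply_of_ne_of_ne hkj hkl]

theorem sum_doubleDiff_sq_mul_exp_swap_swap {j k l m : ι} (hjk : j ≠ k) (hjl : j ≠ l)
    (hjm : j ≠ m) (hkl : k ≠ l) (hkm : k ≠ m) (hlm : l ≠ m) :
    ∑ π : Perm ι, doubleDiff y j k (π j) (π k) ^ 2 *
        exp (u * doubleDiff y j l (π l) (π j) + u * doubleDiff y k m (π m) (π k)) *
        exp (u * permSum y π) =
      ∑ π : Perm ι, doubleDiff y j k (π l) (π m) ^ 2 * exp (u * permSum y π) := by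
  simp only [← mul_add]
  refine sum_mul_exp_of_mul_right (swap j l * swap k m) u (fun π => ?_) fun π => ?_
  · simp [swap_apply_of_ne_of_ne hkl.symm hlm, swap_apply_of_ne_of_ne hjk.symm hkl]
  · rw [← mul_assoc, permSum_mul_swap y hkm, permSum_mul_swap y hjl]
    simp only [Perm.coe_mul, Function.comp_apply, swap_apply_of_ne_of_ne hjm.symm hlm.symm,
      swap_apply_of_ne_of_ne hjk.symm hkl]
    ring

theorem ite_sum_doubleDiff_mul_one_sub_exp (j k : ι) :
    (if j ≠ k then ∑ π : Perm ι, doubleDiff y j k (π j) (π k) *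
        (1 - u * doubleDiff y j k (π j) (π k) - exp (-(u * doubleDiff y j k (π j) (π k)))) *
        exp (u * permSum y π) else 0) =
      ∑ π : Perm ι, (2 * doubleDiff y j k (π j) (π k) - u * doubleDiff y j k (π j) (π k) ^ 2) *
        exp (u * permSum y π) := by
  split_ifs with hjk
  · calc _ = ∑ π : Perm ι,
              (2 * doubleDiff y j k (π j) (π k) - u * doubleDiff y j k (π j) (π k) ^ 2) *
                exp (u * permSum y π) -
            (∑ π : Perm ι, doubleDiff y j k (π j) (π k) * exp (u * permSum y π) +
              ∑ π : Perm ι, doubleDiff y j k (π j) (π k) *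
                exp (-(u * doubleDiff y j k (π j) (π k))) * exp (u * permSum y π)) := by
          rw [← sum_add_distrib, ← sum_sub_distrib]
          exact sum_congr rfl fun π _ => by ring
      _ = _ := by
          rw [sum_doubleDiff_mul_exp_neg y u hjk]
          ring
  · obtain rfl : j = k := not_not.mp hjk
    simp

theorem ite_sum_doubleDiff_sq_mul_one_sub_exp (j k l : ι) :
    (if j ≠ k ∧ j ≠ l ∧ k ≠ l then ∑ π : Perm ι, u * doubleDiff y j k (π j) (π k) ^ 2 *
        (1 - exp (u * doubleDiff y j l (π l) (π j))) * exp (u * permSum y π) else 0) =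
      ∑ π : Perm ι, u * (if j ≠ k ∧ j ≠ l ∧ k ≠ l then
        doubleDiff y j k (π j) (π k) ^ 2 - doubleDiff y j k (π l) (π k) ^ 2 else 0) *
        exp (u * permSum y π) := by
  split_ifs with h
  · obtain ⟨hjk, hjl, hkl⟩ := h
    calc _ = u * (∑ π : Perm ι, doubleDiff y j k (π j) (π k) ^ 2 * exp (u * permSum y π) -
          ∑ π : Perm ι, doubleDiff y j k (π j) (π k) ^ 2 *
            exp (u * doubleDiff y j l (π l) (π j)) * exp (u * permSum y π)) := by
          rw [← sum_sub_distrib, mul_sum]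
          exact sum_congr rfl fun π _ => by ring
      _ = _ := by
          rw [sum_doubleDiff_sq_mul_exp_swap y u hjl hjk.symm hkl, ← sum_sub_distrib, mul_sum]
          exact sum_congr rfl fun π _ => by ring
  · simp

theorem ite_sum_doubleDiff_sq_mul_one_sub_exp_add (j k l m : ι) :
    (if j ≠ k ∧ j ≠ l ∧ j ≠ m ∧ k ≠ l ∧ k ≠ m ∧ l ≠ m then
      ∑ π : Perm ι, u * doubleDiff y j k (π j) (π k) ^ 2 *
        (1 - exp (u * doubleDiff y j l (π l) (π j) + u * doubleDiff y k m (π m) (π k))) *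
        exp (u * permSum y π) else 0) =
      ∑ π : Perm ι, u * (if j ≠ k ∧ j ≠ l ∧ j ≠ m ∧ k ≠ l ∧ k ≠ m ∧ l ≠ m then
        doubleDiff y j k (π j) (π k) ^ 2 - doubleDiff y j k (π l) (π m) ^ 2 else 0) *
        exp (u * permSum y π) := by
  split_ifs with h
  · obtain ⟨hjk, hjl, hjm, hkl, hkm, hlm⟩ := h
    calc _ = u * (∑ π : Perm ι, doubleDiff y j k (π j) (π k) ^ 2 * exp (u * permSum y π) -
          ∑ π : Perm ι, doubleDiff y j k (π j) (π k) ^ 2 *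
            exp (u * doubleDiff y j l (π l) (π j) + u * doubleDiff y k m (π m) (π k)) *
            exp (u * permSum y π)) := by
          rw [← sum_sub_distrib, mul_sum]
          exact sum_congr rfl fun π _ => by ring
      _ = _ := by
          rw [sum_doubleDiff_sq_mul_exp_swap_swap y u hjk hjl hjm hkl hkm hlm, ← sum_sub_distrib,
            mul_sum]
          exact sum_congr rfl fun π _ => by ring
  · simp

theorem sum_ite_sum_doubleDiff_mul_one_sub_exp :
    ∑ j, ∑ k, (if j ≠ k then ∑ π : Perm ι, doubleDiff y j k (π j) (π k) *
        (1 - u * doubleDiff y j k (π j) (π k) - exp (-(u * doubleDiff y j k (π j) (π k)))) *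
        exp (u * permSum y π) else 0) =
      ∑ π : Perm ι, (2 * ∑ j, ∑ k, doubleDiff y j k (π j) (π k) -
        u * ∑ j, ∑ k, doubleDiff y j k (π j) (π k) ^ 2) * exp (u * permSum y π) := by
  simp only [ite_sum_doubleDiff_mul_one_sub_exp, sub_mul, mul_sum, sum_mul, sum_sub_distrib]
  simp only [sum_comm (γ := Perm ι)]

theorem sum_ite_sum_doubleDiff_sq_mul_one_sub_exp :
    ∑ j, ∑ k, ∑ l, (if j ≠ k ∧ j ≠ l ∧ k ≠ l then ∑ π : Perm ι,
        u * doubleDiff y j k (π j) (π k) ^ 2 * (1 - exp (u * doubleDiff y j l (π l) (π j))) *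
        exp (u * permSum y π) else 0) =
      ∑ π : Perm ι, u * (∑ j, ∑ k, ∑ l, if j ≠ k ∧ j ≠ l ∧ k ≠ l then
        doubleDiff y j k (π j) (π k) ^ 2 - doubleDiff y j k (π l) (π k) ^ 2 else 0) *
        exp (u * permSum y π) := by
  simp only [ite_sum_doubleDiff_sq_mul_one_sub_exp, mul_sum, sum_mul]
  simp only [sum_comm (γ := Perm ι)]

theorem sum_ite_sum_doubleDiff_sq_mul_one_sub_exp_add :
    ∑ j, ∑ k, ∑ l, ∑ m, (if j ≠ k ∧ j ≠ l ∧ j ≠ m ∧ k ≠ l ∧ k ≠ m ∧ l ≠ m then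
      ∑ π : Perm ι, u * doubleDiff y j k (π j) (π k) ^ 2 *
        (1 - exp (u * doubleDiff y j l (π l) (π j) + u * doubleDiff y k m (π m) (π k))) *
        exp (u * permSum y π) else 0) =
      ∑ π : Perm ι, u * (∑ j, ∑ k, ∑ l, ∑ m,
        if j ≠ k ∧ j ≠ l ∧ j ≠ m ∧ k ≠ l ∧ k ≠ m ∧ l ≠ m then
          doubleDiff y j k (π j) (π k) ^ 2 - doubleDiff y j k (π l) (π m) ^ 2 else 0) *
        exp (u * permSum y π) := by
  simp only [ite_sum_doubleDiff_sq_mul_one_sub_exp_add, mul_sum, sum_mul]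
  simp only [sum_comm (γ := Perm ι)]

end Exp

section Integral

open Complex

theorem hasDerivAt_sum_exp_mul_exp {ι : Type*} [Fintype ι] (c : ι → ℂ) (α β : ℂ) (t : ℝ) :
    HasDerivAt (fun u : ℝ => (∑ i, exp (u * c i)) * exp ((1 - u) * α + (1 - u ^ 2) * β / 2))
      ((∑ i, (c i - α - t * β) * exp (t * c i)) * exp ((1 - t) * α + (1 - t ^ 2) * β / 2)) t := by
  have h_sum : HasDerivAt (fun v : ℂ => ∑ i, exp (v * c i)) (∑ i, c i * exp (t * c i)) t :=
    HasDerivAt.fun_sum fun i _ => by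
      simpa [mul_comm] using (hasDerivAt_mul_const (c i) (x := (t : ℂ))).cexp
  have h_arg : HasDerivAt (fun v : ℂ => (1 - v) * α + (1 - v ^ 2) * β / 2) (-α - t * β) t :=
    ((((hasDerivAt_id (t : ℂ)).const_sub 1).mul_const α).add
      ((((hasDerivAt_pow 2 (t : ℂ)).const_sub 1).mul_const β).div_const 2)).congr_deriv
      (by simp only [neg_mul, one_mul, Nat.cast_ofNat, Nat.add_one_sub_one, pow_one]; ring)
  refine ((h_sum.mul h_arg.cexp).comp_ofReal).congr_deriv ?_
  simp only [sub_mul, sum_sub_distrib, ← mul_sum]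
  ring

theorem integral_sum_exp_mul_exp {ι : Type*} [Fintype ι] (c : ι → ℂ) (α β : ℂ) :
    ∫ u in (0 : ℝ)..1, (∑ i, (c i - α - u * β) * exp (u * c i)) *
        exp ((1 - u) * α + (1 - u ^ 2) * β / 2) =
      ∑ i, exp (c i) - Fintype.card ι * exp (α + β / 2) := by
  rw [intervalIntegral.integral_eq_sub_of_hasDerivAt
    (fun t _ => hasDerivAt_sum_exp_mul_exp c α β t)
    (Continuous.intervalIntegrable (by fun_prop) _ _)]
  simp

end Integral

/-- Proposition 5: identity (16) for permanents of complex matrices. -/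
theorem stmt_12
    (n : ℕ) (hn : 2 ≤ n) (y : Fin n → Fin n → ℂ)
    (z : Fin n → Fin n → Fin n → Fin n → ℂ)
    (hz : ∀ j k r s, z j k r s = y j r - y k r - y j s + y k s)
    (c : Equiv.Perm (Fin n) → ℂ)
    (hc : ∀ π, c π = ∑ j, y j (π j))
    (ytil : Fin n → Fin n → ℂ)
    (hytil : ∀ j r, ytil j r =
      y j r - (∑ k, y k r) / n - (∑ s, y j s) / n + (∑ k, ∑ s, y k s) / (n : ℂ) ^ 2)
    (α β : ℂ)
    (hα : α = (∑ j, ∑ r, y j r) / n)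
    (hβ : β = (∑ j, ∑ r, (ytil j r) ^ 2) / ((n : ℂ) - 1))
    (f₁ f₂ f₃ f : ℝ → ℂ)
    (hf₁ : ∀ u : ℝ, f₁ u = ∑ j, ∑ k, if j ≠ k then
      ∑ π : Equiv.Perm (Fin n), z j k (π j) (π k) *
        (1 - (u : ℂ) * z j k (π j) (π k) - Complex.exp (-((u : ℂ) * z j k (π j) (π k)))) *
        Complex.exp ((u : ℂ) * c π) else 0)
    (hf₂ : ∀ u : ℝ, f₂ u = ∑ j, ∑ k, ∑ l, if j ≠ k ∧ j ≠ l ∧ k ≠ l then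
      ∑ π : Equiv.Perm (Fin n), (u : ℂ) * (z j k (π j) (π k)) ^ 2 *
        (1 - Complex.exp ((u : ℂ) * z j l (π l) (π j))) *
        Complex.exp ((u : ℂ) * c π) else 0)
    (hf₃ : ∀ u : ℝ, f₃ u = ∑ j, ∑ k, ∑ l, ∑ m,
      if j ≠ k ∧ j ≠ l ∧ j ≠ m ∧ k ≠ l ∧ k ≠ m ∧ l ≠ m then
      ∑ π : Equiv.Perm (Fin n), (u : ℂ) * (z j k (π j) (π k)) ^ 2 *
        (1 - Complex.exp ((u : ℂ) * z j l (π l) (π j) + (u : ℂ) * z k m (π m) (π k))) *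
        Complex.exp ((u : ℂ) * c π) else 0)
    (hf : ∀ u : ℝ, f u = f₁ u / (4 * n) + f₂ u / ((n : ℂ) ^ 2 * ((n : ℂ) - 1)) +
      f₃ u / (4 * (n : ℂ) ^ 2 * ((n : ℂ) - 1))) :
    (∑ π : Equiv.Perm (Fin n), Complex.exp (c π)) / (n.factorial : ℂ) -
        Complex.exp (α + β / 2) =
      (∫ u in (0:ℝ)..1, f u *
        Complex.exp ((1 - (u : ℂ)) * α + (1 - (u : ℂ) ^ 2) * β / 2)) /
        (n.factorial : ℂ) := by
  obtain rfl : z = doubleDiff y := by funext j k r s; exact hz j k r s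
  obtain rfl : c = permSum y := funext hc
  obtain rfl : ytil = doubleCenter y := by funext j r; simp [hytil, doubleCenter, sq]
  have hn₀ : (n : ℂ) ≠ 0 := by norm_cast; omega
  have hn₁ : (n : ℂ) - 1 ≠ 0 := by rw [sub_ne_zero]; norm_cast; omega
  have : Nonempty (Fin n) := ⟨⟨0, by omega⟩⟩
  have hf' : ∀ u : ℝ, f u = ∑ π, (permSum y π - α - u * β) * Complex.exp (u * permSum y π) := by
    intro u
    rw [hf, hf₁, hf₂, hf₃, sum_ite_sum_doubleDiff_mul_one_sub_exp,
      sum_ite_sum_doubleDiff_sq_mul_one_sub_exp, sum_ite_sum_doubleDiff_sq_mul_one_sub_exp_add,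
      sum_div, sum_div, sum_div, ← sum_add_distrib, ← sum_add_distrib]
    refine sum_congr rfl fun π _ => ?_
    have key := card_mul_sum_doubleDiff_sq_sub_distinct y π
    rw [Fintype.card_fin] at key
    rw [sum_doubleDiff_apply_perm, Fintype.card_fin, hα, hβ]
    field_simp
    linear_combination -(u : ℂ) * key
  simp only [hf', integral_sum_exp_mul_exp, Fintype.card_perm, Fintype.card_fin]
  rw [sub_div, mul_div_cancel_left₀ _ (Nat.cast_ne_zero.mpr n.factorial_ne_zero)]
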